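/- For all λ > 0 and all γ ≥ 0, ∫₀^∞ e^{γh} · 4πλ^{3/2} h² e^{−λπh²} dh ≥ ∫₀^∞ e^{γh} · 2λπ h e^{−λπh²} dh ≥ ∫₀^∞ e^{γh} · 2λ^{1/2} e^{−λπh²} dh (all three integrals being finite). That is, in the moment-generating-function order, H_V ≥_{mgf} R ≥_{mgf} H_S. -/

import Mathlib

/-!
All three densities have total mass one on `(0, ∞)`, and each one crosses the next exactly once,
from below: `f_{H_V} - f_R` has the sign of `h - 1/(2√λ)` and `f_R - f_{H_S}` that of
`h - 1/(π√λ)`. If `f - g` has the sign of `x - c` and `∫ f = ∫ g`, then for nondecreasing `φ`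
we get `∫ φ (f - g) = ∫ (φ - φ c) (f - g) ≥ 0`; take `φ h = e^{γh}`.
-/

open MeasureTheory Set Real

def CrossesFromBelow (μ : Measure ℝ) (f g : ℝ → ℝ) (c : ℝ) : Prop :=
  ∀ᵐ x ∂μ, 0 ≤ (x - c) * (f x - g x)

theorem CrossesFromBelow.integral_mul_le {μ : Measure ℝ} {φ f g : ℝ → ℝ} {c : ℝ}
    (hcross : CrossesFromBelow μ f g c) (hφ : Monotone φ) (hf : Integrable f μ)
    (hg : Integrable g μ) (hφf : Integrable (fun x => φ x * f x) μ)
    (hφg : Integrable (fun x => φ x * g x) μ) (hmass : ∫ x, f x ∂μ = ∫ x, g x ∂μ) :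
    ∫ x, φ x * g x ∂μ ≤ ∫ x, φ x * f x ∂μ := by
  have hpoint : ∀ᵐ x ∂μ, φ c * (f x - g x) ≤ φ x * f x - φ x * g x := by
    filter_upwards [hcross] with x hx
    rcases lt_trichotomy x c with hxc | rfl | hxc
    · have hfg : f x - g x ≤ 0 := nonpos_of_mul_nonneg_right hx (sub_neg.2 hxc)
      nlinarith [hφ hxc.le]
    · exact (mul_sub _ _ _).le
    · have hfg : 0 ≤ f x - g x := nonneg_of_mul_nonneg_right hx (sub_pos.2 hxc)
      nlinarith [hφ hxc.le]
  have hzero : ∫ x, φ c * (f x - g x) ∂μ = 0 := by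
    rw [integral_const_mul, integral_sub hf hg, hmass, sub_self, mul_zero]
  have hmono := integral_mono_ae (f := fun x => φ c * (f x - g x))
    (g := fun x => φ x * f x - φ x * g x) ((hf.sub hg).const_mul (φ c)) (hφf.sub hφg) hpoint
  rw [hzero, integral_sub hφf hφg] at hmono
  linarith

theorem integrableOn_exp_mul_pow_mul_exp_neg_mul_sq {b : ℝ} (hb : 0 < b) (γ c : ℝ) (n : ℕ) :
    IntegrableOn (fun h => exp (γ * h) * (c * h ^ n * exp (-(b * h ^ 2)))) (Ioi 0) := by
  have hdom : IntegrableOn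
      (fun h : ℝ => |c| * exp (γ ^ 2 / (2 * b)) * (h ^ (n : ℝ) * exp (-(b / 2) * h ^ 2)))
      (Ioi 0) :=
    (integrableOn_rpow_mul_exp_neg_mul_sq (half_pos hb)
      (neg_one_lt_zero.trans_le n.cast_nonneg)).const_mul _
  refine hdom.mono' (by fun_prop) (ae_restrict_of_forall_mem measurableSet_Ioi
    fun h (hh : 0 < h) => ?_)
  have hsq : γ * h - b * h ^ 2 ≤ γ ^ 2 / (2 * b) - b / 2 * h ^ 2 := by
    have hgap : γ ^ 2 / (2 * b) - b / 2 * h ^ 2 - (γ * h - b * h ^ 2) =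
        (γ - b * h) ^ 2 / (2 * b) := by
      field_simp; ring
    have : 0 ≤ (γ - b * h) ^ 2 / (2 * b) := by positivity
    linarith
  calc ‖exp (γ * h) * (c * h ^ n * exp (-(b * h ^ 2)))‖
      = |c| * h ^ n * exp (γ * h - b * h ^ 2) := by
        simp only [norm_mul, norm_pow, Real.norm_eq_abs, abs_exp, abs_of_pos hh]
        rw [sub_eq_add_neg, exp_add]
        ring
    _ ≤ |c| * h ^ n * exp (γ ^ 2 / (2 * b) - b / 2 * h ^ 2) := by gcongr
    _ = _ := by rw [rpow_natCast, sub_eq_add_neg, exp_add]; ring_nf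

theorem integral_pow_mul_exp_neg_mul_sq {b : ℝ} (hb : 0 < b) (c : ℝ) (n : ℕ) :
    ∫ h in Ioi 0, c * h ^ n * exp (-(b * h ^ 2)) =
      c * Gamma ((n + 1) / 2) / (2 * b ^ (((n : ℝ) + 1) / 2)) := by
  have hΓ := integral_rpow_mul_exp_neg_mul_rpow two_pos
    (neg_one_lt_zero.trans_le n.cast_nonneg) hb
  simp only [rpow_natCast, rpow_two, neg_mul] at hΓ
  simp_rw [mul_assoc c]
  rw [integral_const_mul, hΓ, neg_div, rpow_neg hb.le]
  ring

theorem rpow_three_halves {x : ℝ} (hx : 0 ≤ x) : x ^ ((3 : ℝ) / 2) = x * √x := by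
  rw [show (3 : ℝ) / 2 = 1 + 1 / 2 by norm_num, rpow_add' hx (by norm_num), rpow_one,
    sqrt_eq_rpow]

noncomputable def handoverDensity (lam h : ℝ) : ℝ :=
  4 * π * lam ^ ((3 : ℝ) / 2) * h ^ 2 * exp (-(lam * π * h ^ 2))

noncomputable def nearestDistanceDensity (lam h : ℝ) : ℝ :=
  2 * lam * π * h * exp (-(lam * π * h ^ 2))

noncomputable def maxSignalDensity (lam h : ℝ) : ℝ :=
  2 * lam ^ ((1 : ℝ) / 2) * exp (-(lam * π * h ^ 2))

section Densities

variable {lam : ℝ}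

theorem integrableOn_exp_mul_handoverDensity (hlam : 0 < lam) (γ : ℝ) :
    IntegrableOn (fun h => exp (γ * h) * handoverDensity lam h) (Ioi 0) :=
  integrableOn_exp_mul_pow_mul_exp_neg_mul_sq (by positivity) γ _ 2

theorem integrableOn_exp_mul_nearestDistanceDensity (hlam : 0 < lam) (γ : ℝ) :
    IntegrableOn (fun h => exp (γ * h) * nearestDistanceDensity lam h) (Ioi 0) := by
  simpa [nearestDistanceDensity] using
    integrableOn_exp_mul_pow_mul_exp_neg_mul_sq (b := lam * π) (by positivity) γ (2 * lam * π) 1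

theorem integrableOn_exp_mul_maxSignalDensity (hlam : 0 < lam) (γ : ℝ) :
    IntegrableOn (fun h => exp (γ * h) * maxSignalDensity lam h) (Ioi 0) := by
  simpa [maxSignalDensity] using integrableOn_exp_mul_pow_mul_exp_neg_mul_sq (b := lam * π)
    (by positivity) γ (2 * lam ^ ((1 : ℝ) / 2)) 0

theorem integral_handoverDensity (hlam : 0 < lam) :
    ∫ h in Ioi 0, handoverDensity lam h = 1 := by
  have hΓ : Gamma (3 / 2) = √π / 2 := by
    rw [show (3 : ℝ) / 2 = 1 / 2 + 1 by norm_num, Gamma_add_one (by norm_num),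
      Gamma_one_half_eq]
    ring
  unfold handoverDensity
  rw [integral_pow_mul_exp_neg_mul_sq (by positivity) _ 2]
  push_cast
  norm_num only
  rw [hΓ, rpow_three_halves hlam.le, rpow_three_halves (by positivity), sqrt_mul hlam.le]
  field_simp
  norm_num

theorem integral_nearestDistanceDensity (hlam : 0 < lam) :
    ∫ h in Ioi 0, nearestDistanceDensity lam h = 1 := by
  have hR := integral_pow_mul_exp_neg_mul_sq (b := lam * π) (by positivity) (2 * lam * π) 1
  simp only [pow_one, Nat.cast_one] at hR
  unfold nearestDistanceDensity
  rw [hR]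
  norm_num
  field_simp

theorem integral_maxSignalDensity (hlam : 0 < lam) :
    ∫ h in Ioi 0, maxSignalDensity lam h = 1 := by
  have hS := integral_pow_mul_exp_neg_mul_sq (b := lam * π) (by positivity) (2 * √lam) 0
  norm_num [Gamma_one_half_eq, ← sqrt_eq_rpow, sqrt_mul hlam.le] at hS
  unfold maxSignalDensity
  rw [← sqrt_eq_rpow, hS]
  field_simp

theorem crossesFromBelow_handoverDensity_nearestDistanceDensity (hlam : 0 < lam) :
    CrossesFromBelow (volume.restrict (Ioi 0)) (handoverDensity lam)
      (nearestDistanceDensity lam) (1 / (2 * √lam)) := by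
  refine ae_restrict_of_forall_mem measurableSet_Ioi fun h (hh : 0 < h) => ?_
  have hs : 0 < √lam := sqrt_pos.2 hlam
  have hdiff : (h - 1 / (2 * √lam)) * (handoverDensity lam h - nearestDistanceDensity lam h) =
      4 * lam * π * √lam * h * exp (-(lam * π * h ^ 2)) * (h - 1 / (2 * √lam)) ^ 2 := by
    rw [handoverDensity, nearestDistanceDensity, rpow_three_halves hlam.le]
    field_simp
    ring
  rw [hdiff]
  positivity

theorem crossesFromBelow_nearestDistanceDensity_maxSignalDensity (μ : Measure ℝ)
    (hlam : 0 < lam) :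
    CrossesFromBelow μ (nearestDistanceDensity lam)
      (maxSignalDensity lam) (1 / (π * √lam)) := by
  refine ae_of_all _ fun h => ?_
  have hs : 0 < √lam := sqrt_pos.2 hlam
  have hdiff : (h - 1 / (π * √lam)) * (nearestDistanceDensity lam h - maxSignalDensity lam h) =
      2 * lam * π * exp (-(lam * π * h ^ 2)) * (h - 1 / (π * √lam)) ^ 2 := by
    rw [nearestDistanceDensity, maxSignalDensity, ← sqrt_eq_rpow]
    field_simp
    linear_combination (1 - h * π * √lam) * sq_sqrt hlam.le
  rw [hdiff]
  positivity

end Densities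

theorem stmt_14 (lam γ : ℝ) (hlam : 0 < lam) (hγ : 0 ≤ γ) :
    IntegrableOn (fun h : ℝ => Real.exp (γ * h) *
      (4 * Real.pi * lam ^ ((3:ℝ)/2) * h ^ 2 * Real.exp (-(lam * Real.pi * h ^ 2)))) (Ioi 0) ∧
    IntegrableOn (fun h : ℝ => Real.exp (γ * h) *
      (2 * lam * Real.pi * h * Real.exp (-(lam * Real.pi * h ^ 2)))) (Ioi 0) ∧
    IntegrableOn (fun h : ℝ => Real.exp (γ * h) *
      (2 * lam ^ ((1:ℝ)/2) * Real.exp (-(lam * Real.pi * h ^ 2)))) (Ioi 0) ∧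
    (∫ h in Ioi (0:ℝ), Real.exp (γ * h) *
        (4 * Real.pi * lam ^ ((3:ℝ)/2) * h ^ 2 * Real.exp (-(lam * Real.pi * h ^ 2)))) ≥
      (∫ h in Ioi (0:ℝ), Real.exp (γ * h) *
        (2 * lam * Real.pi * h * Real.exp (-(lam * Real.pi * h ^ 2)))) ∧
    (∫ h in Ioi (0:ℝ), Real.exp (γ * h) *
        (2 * lam * Real.pi * h * Real.exp (-(lam * Real.pi * h ^ 2)))) ≥
      ∫ h in Ioi (0:ℝ), Real.exp (γ * h) *
        (2 * lam ^ ((1:ℝ)/2) * Real.exp (-(lam * Real.pi * h ^ 2))) := by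
  have hφ : Monotone fun h : ℝ => exp (γ * h) :=
    exp_monotone.comp (monotone_mul_left_of_nonneg hγ)
  have hV := integrableOn_exp_mul_handoverDensity hlam
  have hR := integrableOn_exp_mul_nearestDistanceDensity hlam
  have hS := integrableOn_exp_mul_maxSignalDensity hlam
  refine ⟨hV γ, hR γ, hS γ, ?_, ?_⟩
  · exact (crossesFromBelow_handoverDensity_nearestDistanceDensity hlam).integral_mul_le hφ
      (by simpa [IntegrableOn] using hV 0) (by simpa [IntegrableOn] using hR 0) (hV γ) (hR γ)
      (by rw [integral_handoverDensity hlam, integral_nearestDistanceDensity hlam])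
  · exact (crossesFromBelow_nearestDistanceDensity_maxSignalDensity _ hlam).integral_mul_le hφ
      (by simpa [IntegrableOn] using hR 0) (by simpa [IntegrableOn] using hS 0) (hR γ) (hS γ)
      (by rw [integral_nearestDistanceDensity hlam, integral_maxSignalDensity hlam])
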